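/- Let G be a complete t-partite graph on the vertex set V with parts V_1, …, V_t (two vertices are adjacent if and only if they lie in different parts), let K be a field, and for each i let W_i be a nonempty subset of V_i. Let H be the induced subgraph of G on W_1 ∪ ⋯ ∪ W_t (which is the complete t-partite graph with parts W_1,…,W_t). Then the cut algebra K[H] is an algebra retract of the cut algebra K[G]. -/

import Mathlib

open scoped Classical

noncomputable section

namespace CutPaper

open MvPolynomial

/-- An edge `e` is cut by the partition `A | Aᶜ` if it has exactly one endpoint in `A`. -/
def IsCutEdge {V : Type} (A : Set V) (e : Sym2 V) : Prop :=
  ∃ u v : V, e = s(u, v) ∧ u ∈ A ∧ v ∉ A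

/-- The cut set of `A`: all edges of `G` with exactly one endpoint in `A`. -/
def cutSet {V : Type} (G : SimpleGraph V) (A : Set V) : Set (Sym2 V) :=
  {e ∈ G.edgeSet | IsCutEdge A e}

lemma isCutEdge_compl {V : Type} (A : Set V) (e : Sym2 V) :
    IsCutEdge Aᶜ e ↔ IsCutEdge A e := by
  constructor <;> rintro ⟨u, v, rfl, hu, hv⟩
  · exact ⟨v, u, Sym2.eq_swap, Set.notMem_compl_iff.mp hv, hu⟩
  · exact ⟨v, u, Sym2.eq_swap, hv, not_not_intro hu⟩

/-- Two subsets determine the same unordered partition `A | Aᶜ` of `V`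
iff they are equal or complementary. -/
def partitionSetoid (V : Type) : Setoid (Set V) where
  r A B := B = A ∨ B = Aᶜ
  iseqv := by
    refine ⟨fun A => Or.inl rfl, @fun A B h => ?_, @fun A B C h1 h2 => ?_⟩
    · rcases h with rfl | rfl
      · exact Or.inl rfl
      · exact Or.inr (compl_compl A).symm
    · rcases h1 with rfl | rfl <;> rcases h2 with rfl | rfl
      · exact Or.inl rfl
      · exact Or.inr rfl
      · exact Or.inr rfl
      · exact Or.inl (compl_compl A)

/-- The unordered partitions `A | Aᶜ` of `V`, indexing the variables of `S_G`. -/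
abbrev Partition (V : Type) := Quotient (partitionSetoid V)

variable (K : Type) [CommRing K]

/-- The variable `q_{A|Aᶜ}` of the polynomial ring `S_G`. -/
def qPart {V : Type} (A : Set V) : MvPolynomial (Partition V) K :=
  X (Quotient.mk (partitionSetoid V) A)

/-- The monomial `u_A = ∏_{e ∈ Cut(A)} s_e · ∏_{e ∈ E \ Cut(A)} t_e`;
the variable `s_e` is `X (true, e)` and `t_e` is `X (false, e)`. -/
def cutMonomial {V : Type} [Finite V] (G : SimpleGraph V) (A : Set V) :
    MvPolynomial (Bool × Sym2 V) K :=
  ∏ e ∈ (Set.toFinite G.edgeSet).toFinset,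
    if IsCutEdge A e then X (true, e) else X (false, e)

lemma cutMonomial_compl {V : Type} [Finite V] (G : SimpleGraph V) (A : Set V) :
    cutMonomial K G Aᶜ = cutMonomial K G A := by
  unfold cutMonomial
  refine Finset.prod_congr rfl fun e _ => ?_
  by_cases h : IsCutEdge A e
  · rw [if_pos ((isCutEdge_compl A e).mpr h), if_pos h]
  · rw [if_neg fun hc => h ((isCutEdge_compl A e).mp hc), if_neg h]

/-- The `K`-algebra homomorphism `φ_G : S_G → R_G`, `q_{A|Aᶜ} ↦ u_A`. -/
def phi {V : Type} [Finite V] (G : SimpleGraph V) :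
    MvPolynomial (Partition V) K →ₐ[K] MvPolynomial (Bool × Sym2 V) K :=
  aeval fun p : Partition V =>
    Quotient.lift (cutMonomial K G)
      (fun A B hAB => by
        have h : B = A ∨ B = Aᶜ := hAB
        rcases h with rfl | rfl
        · rfl
        · exact (cutMonomial_compl K G A).symm) p

/-- The cut ideal `I_G = ker φ_G`. -/
def cutIdeal {V : Type} [Finite V] (G : SimpleGraph V) :
    Ideal (MvPolynomial (Partition V) K) :=
  RingHom.ker (phi K G)

/-- The cut algebra `K[G]`, i.e. the image of `φ_G`: the `K`-subalgebra of `R_G`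
generated by the monomials `u_A`. -/
def cutAlgebra {V : Type} [Finite V] (G : SimpleGraph V) :
    Subalgebra K (MvPolynomial (Bool × Sym2 V) K) :=
  Algebra.adjoin K {m | ∃ A : Set V, m = cutMonomial K G A}

/-- The generator `u_A` of the cut algebra, as an element of the cut algebra. -/
def uGen {V : Type} [Finite V] (G : SimpleGraph V) (A : Set V) : ↥(cutAlgebra K G) :=
  ⟨cutMonomial K G A, Algebra.subset_adjoin ⟨A, rfl⟩⟩

/-- An element of `S_G/I` is homogeneous of degree `d` if it is the class of a homogeneous
polynomial of degree `d`. -/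
def QuotHomogeneous {σ : Type} (I : Ideal (MvPolynomial σ K)) (d : ℕ)
    (x : MvPolynomial σ K ⧸ I) : Prop :=
  ∃ f : MvPolynomial σ K, f.IsHomogeneous d ∧ Ideal.Quotient.mk I f = x

/-- The cut algebra of `H` is an algebra retract of the cut algebra of `G`:
there are homogeneous `K`-algebra homomorphisms `ι : K[H] → K[G]` (injective) and
`π : K[G] → K[H]` with `π ∘ ι = id`. -/
def CutAlgebraRetract {V W : Type} [Finite V] [Finite W]
    (H : SimpleGraph W) (G : SimpleGraph V) : Prop :=
  ∃ (ι : (MvPolynomial (Partition W) K ⧸ cutIdeal K H) →ₐ[K]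
      (MvPolynomial (Partition V) K ⧸ cutIdeal K G))
    (π : (MvPolynomial (Partition V) K ⧸ cutIdeal K G) →ₐ[K]
      (MvPolynomial (Partition W) K ⧸ cutIdeal K H)),
    Function.Injective ι ∧
    (∀ d x, QuotHomogeneous K (cutIdeal K H) d x →
      ∃ d', QuotHomogeneous K (cutIdeal K G) d' (ι x)) ∧
    (∀ d x, QuotHomogeneous K (cutIdeal K G) d x →
      ∃ d', QuotHomogeneous K (cutIdeal K H) d' (π x)) ∧
    π.comp ι = AlgHom.id K _

/-- The graph obtained from `G` by contracting the edge `{u, v}`: the vertex `u` is removed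
and merged into `v`. -/
def contractEdge {V : Type} (G : SimpleGraph V) (u v : V) :
    SimpleGraph {x : V // x ≠ u} where
  Adj a b := a ≠ b ∧
    (G.Adj a b ∨ ((a : V) = v ∧ G.Adj u b) ∨ ((b : V) = v ∧ G.Adj a u))
  symm := ⟨by
    rintro a b ⟨hne, h | ⟨ha, h⟩ | ⟨hb, h⟩⟩
    · exact ⟨hne.symm, Or.inl h.symm⟩
    · exact ⟨hne.symm, Or.inr (Or.inr ⟨ha, h.symm⟩)⟩
    · exact ⟨hne.symm, Or.inr (Or.inl ⟨hb, h.symm⟩)⟩⟩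
  loopless := ⟨fun a h => h.1 rfl⟩

/-- The induced subgraph `G_W` is a neighborhood-minor of `G`: `W` and `W' = Wᶜ` are nonempty
and there is a vertex `v ∈ W` with `W ∩ N_G(W') ⊆ N_{G_W}[v]`. -/
def IsNeighborhoodMinor {V : Type} (G : SimpleGraph V) (W : Set V) : Prop :=
  W.Nonempty ∧ Wᶜ.Nonempty ∧
    ∃ v ∈ W, ∀ x ∈ W, (∃ y ∈ Wᶜ, G.Adj y x) → x = v ∨ G.Adj v x

/-- The cut vector `δ_A ∈ {0,1}^E` of the partition `A | Aᶜ`. -/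
def cutVector {V : Type} (G : SimpleGraph V) (A : Set V) : ↥G.edgeSet → ℝ :=
  fun e => if IsCutEdge A (e : Sym2 V) then 1 else 0

/-- The cut polytope `Cut^□(G) ⊆ ℝ^E`: the convex hull of the cut vectors. -/
def cutPolytope {V : Type} (G : SimpleGraph V) : Set (↥G.edgeSet → ℝ) :=
  convexHull ℝ {x | ∃ A : Set V, x = cutVector G A}

/-- `F` is a face of `P`: either a trivial face (`P` or `∅`), or the intersection of `P`
with a supporting hyperplane. -/
def IsFace {α : Type} (P F : Set (α → ℝ)) : Prop :=
  F = P ∨ F = ∅ ∨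
    ∃ (φ : (α → ℝ) →ₗ[ℝ] ℝ) (c : ℝ), φ ≠ 0 ∧
      (∀ x ∈ P, φ x ≤ c) ∧ F = P ∩ {x | φ x = c}

/-- `P` and `Q` are affinely isomorphic: there is a bijective map from `P` onto `Q`
extending to an affine map. -/
def AffinelyIsomorphic {α β : Type} (P : Set (α → ℝ)) (Q : Set (β → ℝ)) : Prop :=
  ∃ f : (α → ℝ) →ᵃ[ℝ] (β → ℝ), Set.InjOn f P ∧ f '' P = Q

/-- The monomial `z · ∏_{e ∈ Cut(A)} y_e` of the polytopal algebra of the cut polytope;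
the variable `z` is `X none` and `y_e` is `X (some e)`. -/
def polytopeMonomial {V : Type} [Finite V] (G : SimpleGraph V) (A : Set V) :
    MvPolynomial (Option (Sym2 V)) K :=
  X none * ∏ e ∈ (Set.toFinite (cutSet G A)).toFinset, X (some e)

/-- The polytopal algebra `K[Cut^□(G)]`: the subalgebra of `K[y_e (e ∈ E), z]` generated by
the monomials `z · y^{δ_A}` attached to the lattice points (= cut vectors) of `Cut^□(G)`. -/
def polytopalAlgebra {V : Type} [Finite V] (G : SimpleGraph V) :
    Subalgebra K (MvPolynomial (Option (Sym2 V)) K) :=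
  Algebra.adjoin K {m | ∃ A : Set V, m = polytopeMonomial K G A}

/-- `G'` is a combinatorial retract of `G`: it is obtained from `G` by a finite sequence of
edge contractions and neighborhood-minors. -/
inductive CombinatorialRetract : ∀ {V W : Type}, SimpleGraph V → SimpleGraph W → Prop
  | refl {V : Type} (G : SimpleGraph V) : CombinatorialRetract G G
  | contract {V W : Type} (G : SimpleGraph V) (u v : V) (huv : G.Adj u v)
      (G' : SimpleGraph W) (h : CombinatorialRetract (contractEdge G u v) G') :
      CombinatorialRetract G G'
  | nbhdMinor {V W : Type} (G : SimpleGraph V) (S : Set V)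
      (hS : IsNeighborhoodMinor G S) (G' : SimpleGraph W)
      (h : CombinatorialRetract (SimpleGraph.induce S G) G') :
      CombinatorialRetract G G'

/-!
A graph homomorphism `f : G → G'` pulls cuts back, `B ↦ f⁻¹B`, and the substitution
`x_{(b,e')} ↦ ∏_{f(e) = e'} x_{(b,e)}` carries `u_B` to `u_{f⁻¹B}`, because every edge of `G`
lies over exactly one edge of `G'`. Hence `q_B ↦ q_{f⁻¹B}` maps `I_{G'}` into `I_G` and induces a
degree-preserving homomorphism `K[G'] → K[G]`, contravariantly functorial in `f`. So a graph
retract `H` of `G` gives an algebra retract `K[H]` of `K[G]`. In a complete multipartite graph,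
a set `W` meeting every part is a retract: send each vertex outside `W` to a vertex of `W` in
its own part, which keeps adjacent vertices in different parts.
-/

namespace Partition

def comap {V W : Type} (f : V → W) : Partition W → Partition V :=
  Quotient.map (f ⁻¹' ·) fun A B h => by
    rcases (h : B = A ∨ B = Aᶜ) with rfl | rfl
    exacts [Or.inl rfl, Or.inr Set.preimage_compl]

lemma comap_mk {V W : Type} (f : V → W) (B : Set W) :
    comap f (Quotient.mk _ B) = Quotient.mk (partitionSetoid V) (f ⁻¹' B) :=
  rfl

lemma comap_comp_comap {U V W : Type} (f : U → V) (g : V → W) :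
    comap f ∘ comap g = comap (g ∘ f) := by
  funext p
  induction p using Quotient.ind
  rfl

lemma comap_id {V : Type} : comap (id : V → V) = id := by
  funext p
  induction p using Quotient.ind
  rfl

end Partition

lemma isCutEdge_mk_iff {V : Type} (A : Set V) (x y : V) :
    IsCutEdge A s(x, y) ↔ ¬(x ∈ A ↔ y ∈ A) := by
  constructor
  · rintro ⟨u, v, h, hu, hv⟩
    rcases Sym2.eq_iff.mp h with ⟨rfl, rfl⟩ | ⟨rfl, rfl⟩ <;> tauto
  · intro h
    by_cases hx : x ∈ A
    · exact ⟨x, y, rfl, hx, fun hy => h ⟨fun _ => hy, fun _ => hx⟩⟩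
    · exact ⟨y, x, Sym2.eq_swap, by tauto, hx⟩

lemma isCutEdge_preimage {V W : Type} (f : V → W) (B : Set W) (e : Sym2 V) :
    IsCutEdge (f ⁻¹' B) e ↔ IsCutEdge B (Sym2.map f e) := by
  induction e using Sym2.ind with
  | _ x y => rw [Sym2.map_mk, isCutEdge_mk_iff, isCutEdge_mk_iff, Set.mem_preimage,
      Set.mem_preimage]

def edgePullback {V V' : Type} [Finite V] (f : V → V') (G : SimpleGraph V) :
    MvPolynomial (Bool × Sym2 V') K →ₐ[K] MvPolynomial (Bool × Sym2 V) K :=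
  aeval fun p => ∏ e ∈ (Set.toFinite G.edgeSet).toFinset with Sym2.map f e = p.2, X (p.1, e)

section

variable {V V' : Type} [Finite V] [Finite V'] {G : SimpleGraph V} {G' : SimpleGraph V'}

lemma edgePullback_cutMonomial (f : G →g G') (B : Set V') :
    edgePullback K f G (cutMonomial K G' B) = cutMonomial K G (f ⁻¹' B) := by
  have maps_to : ∀ e ∈ (Set.toFinite G.edgeSet).toFinset,
      Sym2.map f e ∈ (Set.toFinite G'.edgeSet).toFinset := by
    simpa only [Set.Finite.mem_toFinset] using fun e => f.map_mem_edgeSet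
  simp only [cutMonomial, isCutEdge_preimage]
  rw [map_prod, ← Finset.prod_fiberwise_of_maps_to maps_to]
  refine Finset.prod_congr rfl fun e' _ => ?_
  rw [apply_ite (edgePullback K f G), edgePullback, aeval_X, aeval_X, ← Finset.prod_ite_irrel]
  refine Finset.prod_congr rfl fun e he => ?_
  rw [(Finset.mem_filter.mp he).2]

lemma phi_comp_rename_comap (f : G →g G') :
    (phi K G).comp (rename (Partition.comap f)) = (edgePullback K f G).comp (phi K G') := by
  refine algHom_ext fun p => ?_
  induction p using Quotient.ind with
  | _ B =>
    simp only [AlgHom.comp_apply, rename_X, Partition.comap_mk, phi, aeval_X]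
    exact (edgePullback_cutMonomial K f B).symm

lemma cutIdeal_le_comap_rename_comap (f : G →g G') :
    cutIdeal K G' ≤ (cutIdeal K G).comap (rename (Partition.comap f)) := fun a ha => by
  simp only [cutIdeal, Ideal.mem_comap, RingHom.mem_ker] at ha ⊢
  rw [← AlgHom.comp_apply, phi_comp_rename_comap, AlgHom.comp_apply, ha, map_zero]

def cutAlgebraMap (f : G →g G') :
    (MvPolynomial (Partition V') K ⧸ cutIdeal K G') →ₐ[K]
      (MvPolynomial (Partition V) K ⧸ cutIdeal K G) :=
  Ideal.quotientMapₐ _ (rename (Partition.comap f)) (cutIdeal_le_comap_rename_comap K f)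

lemma cutAlgebraMap_mk (f : G →g G') (a : MvPolynomial (Partition V') K) :
    cutAlgebraMap K f (Ideal.Quotient.mk _ a) =
      Ideal.Quotient.mk _ (rename (Partition.comap f) a) :=
  rfl

lemma QuotHomogeneous.cutAlgebraMap (f : G →g G') {d : ℕ} {x}
    (hx : QuotHomogeneous K (cutIdeal K G') d x) :
    QuotHomogeneous K (cutIdeal K G) d (cutAlgebraMap K f x) := by
  obtain ⟨a, ha, rfl⟩ := hx
  exact ⟨_, ha.rename_isHomogeneous, (cutAlgebraMap_mk K f a).symm⟩

lemma cutAlgebraMap_comp (f : G →g G') {V'' : Type} [Finite V''] {G'' : SimpleGraph V''}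
    (g : G' →g G'') :
    (cutAlgebraMap K f).comp (cutAlgebraMap K g) = cutAlgebraMap K (g.comp f) := by
  refine Ideal.Quotient.algHom_ext K (MvPolynomial.algHom_ext fun p => ?_)
  simp only [AlgHom.comp_apply, Ideal.Quotient.mkₐ_eq_mk, cutAlgebraMap_mk, rename_X,
    ← Function.comp_apply (f := Partition.comap f), Partition.comap_comp_comap]
  rfl

end

theorem cutAlgebraRetract_of_leftInverse {V W : Type} [Finite V] [Finite W]
    {G : SimpleGraph V} {H : SimpleGraph W} (r : G →g H) (s : H →g G)
    (hrs : Function.LeftInverse r s) : CutAlgebraRetract K H G := by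
  have hπι : (cutAlgebraMap K s).comp (cutAlgebraMap K r) = AlgHom.id K _ := by
    rw [cutAlgebraMap_comp]
    refine Ideal.Quotient.algHom_ext K (MvPolynomial.algHom_ext fun p => ?_)
    simp only [AlgHom.comp_apply, Ideal.Quotient.mkₐ_eq_mk, cutAlgebraMap_mk, rename_X]
    rw [show (r.comp s : W → W) = id from funext hrs, Partition.comap_id]
    rfl
  exact ⟨cutAlgebraMap K r, cutAlgebraMap K s,
    Function.LeftInverse.injective (AlgHom.congr_fun hπι),
    fun d _ hx => ⟨d, hx.cutAlgebraMap K r⟩, fun d _ hx => ⟨d, hx.cutAlgebraMap K s⟩, hπι⟩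

lemma exists_retraction_induce_comap_top {V : Type} {t : ℕ} (part : V → Fin t) (W : Set V)
    (hW : ∀ i : Fin t, ∃ w ∈ W, part w = i) :
    ∃ r : SimpleGraph.comap part ⊤ →g SimpleGraph.induce W (SimpleGraph.comap part ⊤),
      Function.LeftInverse r ((↑) : W → V) := by
  choose w hwW hwpart using hW
  let r : V → W := fun v => if h : v ∈ W then ⟨v, h⟩ else ⟨w (part v), hwW _⟩
  have hpart : ∀ v, part (r v) = part v := fun v => by
    by_cases h : v ∈ W <;> simp [r, h, hwpart]
  refine ⟨⟨r, fun {x y} hxy => ?_⟩, fun x => dif_pos x.2⟩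
  simpa [hpart] using hxy

theorem stmt16_general {V : Type} [Fintype V] (K : Type) [Field K]
    (t : ℕ) (part : V → Fin t)
    (W : Set V) (hW : ∀ i : Fin t, ∃ w ∈ W, part w = i) :
    CutAlgebraRetract K
      (SimpleGraph.induce W (SimpleGraph.comap part (⊤ : SimpleGraph (Fin t))))
      (SimpleGraph.comap part (⊤ : SimpleGraph (Fin t))) := by
  obtain ⟨r, hr⟩ := exists_retraction_induce_comap_top part W hW
  exact cutAlgebraRetract_of_leftInverse K r (SimpleGraph.Embedding.induce W).toHom hr

theorem stmt16 {V : Type} [Fintype V] [Nonempty V] (K : Type) [Field K]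
    (t : ℕ) (part : V → Fin t) (hsurj : Function.Surjective part)
    (W : Set V) (hW : ∀ i : Fin t, ∃ w ∈ W, part w = i) :
    CutAlgebraRetract K
      (SimpleGraph.induce W (SimpleGraph.comap part (⊤ : SimpleGraph (Fin t))))
      (SimpleGraph.comap part (⊤ : SimpleGraph (Fin t))) :=
  stmt16_general K t part W hW

end CutPaper
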